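/- Let λ and μ be finite complex measures on ℝ, both supported in [0, ∞), and set f(t) = ∫ exp(ipt) dλ(p) and g(t) = ∫ exp(ipt) dμ(p). If f(t) = g(t) for all t in some nonempty open interval, then f = g on all of ℝ. -/

import Mathlib

/-!
Since `λ` lives on `[0, ∞)`, `f` extends to `F(z) = ∫ e^{ipz} dλ(p)`, which is bounded and
continuous on the closed upper half-plane and holomorphic inside it; likewise for `g`. After an
affine change of variables the difference `H` of the two extensions vanishes on `[-1, 1]`. As
`z ↦ -z⁻¹` preserves the upper half-plane and maps `ℝ \ [-1, 1]` into `[-1, 1]`, the bounded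
function `H(z) H(-z⁻¹)` vanishes on all of `ℝ`, so it vanishes identically by Phragmén–Lindelöf.
By the identity theorem one of the factors, hence `H`, vanishes on the open half-plane, and by
continuity on `ℝ`.
-/

open MeasureTheory Complex Set Filter Topology

theorem MeasureTheory.Integrable.ae_eq_zero_on_of_forall_setIntegral_eq_zero {α E : Type*}
    [MeasurableSpace α] [NormedAddCommGroup E] [NormedSpace ℝ E] [CompleteSpace E]
    {μ : Measure α} {w : α → E} (hw : Integrable w μ) {S : Set α} (hS : MeasurableSet S)
    (h : ∀ A, MeasurableSet A → A ⊆ S → ∫ p in A, w p ∂μ = 0) :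
    ∀ᵐ p ∂μ, p ∈ S → w p = 0 := by
  have hS0 : w =ᵐ[μ.restrict S] 0 := hw.restrict.ae_eq_zero_of_forall_setIntegral_eq_zero
    fun A hA _ => by rw [Measure.restrict_restrict hA]; exact h _ (hA.inter hS) inter_subset_right
  exact (ae_restrict_iff' hS).1 hS0

theorem PhragmenLindelof.eq_zero_on_upper_half_plane_of_bounded {E : Type*}
    [NormedAddCommGroup E] [NormedSpace ℂ E] {f : ℂ → E} {C : ℝ}
    (hd : DiffContOnCl ℂ f {z | 0 < z.im}) (hb : ∀ z : ℂ, 0 ≤ z.im → ‖f z‖ ≤ C)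
    (h0 : ∀ x : ℝ, f x = 0) {z : ℂ} (hz : 0 ≤ z.im) : f z = 0 := by
  have hrot : MapsTo (I * ·) {w : ℂ | 0 < w.re} {w | 0 < w.im} := fun w hw => by simpa using hw
  have hbd : ∀ w : ℂ, 0 ≤ w.re → ‖f (I * w)‖ ≤ C := fun w hw => hb _ (by simpa using hw)
  have hreal : ∀ x : ℝ, ‖(f ∘ (I * ·)) (x * I)‖ ≤ 0 := fun x => by
    have hx : I * (x * I) = ((-x : ℝ) : ℂ) := by push_cast; linear_combination (x : ℂ) * I_sq
    simp only [Function.comp_apply, hx, h0, norm_zero, le_refl]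
  have key := right_half_plane_of_bounded_on_real (z := -I * z)
    (hd.comp (differentiable_id.const_mul I).diffContOnCl hrot)
    ⟨0, two_pos, 0, .of_bound C <| eventually_inf_principal.2 <| .of_forall fun w hw => by
      simpa using hbd w (le_of_lt hw)⟩
    (isBoundedUnder_of_eventually_le (a := C) <|
      eventually_atTop.2 ⟨0, fun x hx => hbd x (by simpa using hx)⟩)
    hreal (by simpa using hz)
  simpa [← mul_assoc] using key

namespace Complex

theorem neg_inv_im (z : ℂ) : (-z⁻¹).im = z.im / normSq z := by
  simp [inv_im, neg_div]

theorem mapsTo_neg_inv_upper_half_plane :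
    MapsTo (fun z : ℂ => -z⁻¹) {z | 0 < z.im} {z | 0 < z.im} := fun z hz => by
  have hz0 : z ≠ 0 := ne_of_apply_ne im (ne_of_gt hz)
  simpa only [mem_ofPred_eq, neg_inv_im] using div_pos hz (normSq_pos.2 hz0)

theorem mapsTo_neg_inv_closed_upper_half_plane :
    MapsTo (fun z : ℂ => -z⁻¹) {z | 0 ≤ z.im} {z | 0 ≤ z.im} := fun z hz => by
  simpa only [mem_ofPred_eq, neg_inv_im] using div_nonneg hz (normSq_nonneg z)

theorem differentiableOn_comp_neg_inv {F : ℂ → ℂ} (hd : DifferentiableOn ℂ F {z | 0 < z.im}) :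
    DifferentiableOn ℂ (fun z => F (-z⁻¹)) {z | 0 < z.im} :=
  hd.comp (differentiableOn_id.inv fun _ hz => ne_of_apply_ne im (ne_of_gt hz)).neg
    mapsTo_neg_inv_upper_half_plane

theorem diffContOnCl_mul_comp_neg_inv {F : ℂ → ℂ} {C : ℝ}
    (hd : DiffContOnCl ℂ F {z | 0 < z.im}) (hb : ∀ z : ℂ, 0 ≤ z.im → ‖F z‖ ≤ C) (hF0 : F 0 = 0) :
    DiffContOnCl ℂ (fun z => F z * F (-z⁻¹)) {z | 0 < z.im} := by
  have hFc : ContinuousOn F {z | 0 ≤ z.im} := closure_setOfPred_lt_im 0 ▸ hd.2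
  refine ⟨hd.1.mul (differentiableOn_comp_neg_inv hd.1),
    closure_setOfPred_lt_im 0 ▸ fun z hz => ?_⟩
  rcases eq_or_ne z 0 with rfl | hz0
  · -- at the pole of `-z⁻¹` the first factor tends to `0` and the second one stays bounded
    have hlim := (hF0 ▸ (hFc 0 hz).tendsto).zero_mul_isBoundedUnder_le (g := fun z => F (-z⁻¹))
      ⟨C, eventually_map.2 <| eventually_nhdsWithin_of_forall fun z hz =>
        hb _ (mapsTo_neg_inv_closed_upper_half_plane hz)⟩
    simpa [ContinuousWithinAt, hF0] using hlim
  · exact (hFc z hz).mul ((hFc _ (mapsTo_neg_inv_closed_upper_half_plane hz)).comp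
      (f := fun z : ℂ => -z⁻¹) (continuousAt_inv₀ hz0).neg.continuousWithinAt
      mapsTo_neg_inv_closed_upper_half_plane)

theorem eq_zero_on_upper_half_plane_of_eq_zero_on_Icc {F : ℂ → ℂ} {C : ℝ}
    (hd : DiffContOnCl ℂ F {z | 0 < z.im}) (hb : ∀ z : ℂ, 0 ≤ z.im → ‖F z‖ ≤ C)
    (h0 : ∀ x : ℝ, |x| ≤ 1 → F x = 0) {z : ℂ} (hz : 0 ≤ z.im) : F z = 0 := by
  have hU : IsOpen {z : ℂ | 0 < z.im} := isOpen_lt continuous_const continuous_im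
  have hQ0 : ∀ x : ℝ, F x * F (-(x : ℂ)⁻¹) = 0 := by
    intro x
    rcases le_or_gt |x| 1 with hx | hx
    · rw [h0 x hx, zero_mul]
    · have hx' : |-x⁻¹| ≤ 1 := by
        rw [abs_neg, abs_inv]; exact inv_le_one_of_one_le₀ hx.le
      rw [show -(x : ℂ)⁻¹ = ((-x⁻¹ : ℝ) : ℂ) by push_cast; ring, h0 _ hx', mul_zero]
  have hQb : ∀ z : ℂ, 0 ≤ z.im → ‖F z * F (-z⁻¹)‖ ≤ C * C := fun z hz => by
    simpa only [norm_mul] using mul_le_mul (hb z hz)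
      (hb _ (mapsTo_neg_inv_closed_upper_half_plane hz)) (norm_nonneg _)
      ((norm_nonneg _).trans (hb z hz))
  have hQ : ∀ z ∈ {z : ℂ | 0 < z.im}, F z * F (-z⁻¹) = 0 := fun z hz =>
    PhragmenLindelof.eq_zero_on_upper_half_plane_of_bounded
      (diffContOnCl_mul_comp_neg_inv hd hb (by simpa using h0 0 (by simp))) hQb hQ0 (le_of_lt hz)
  have hFU : ∀ z ∈ {z : ℂ | 0 < z.im}, F z = 0 := by
    rcases AnalyticOnNhd.eq_zero_or_eq_zero_of_mul_eq_zero (hd.1.analyticOnNhd hU)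
      ((differentiableOn_comp_neg_inv hd.1).analyticOnNhd hU) hQ
      (convex_halfSpace_im_gt 0).isPreconnected with h | h
    · exact h
    · intro z hz
      simpa using h _ (mapsTo_neg_inv_upper_half_plane hz)
  exact EqOn.of_subset_closure (t := {z | 0 ≤ z.im}) hFU (closure_setOfPred_lt_im 0 ▸ hd.2)
    continuousOn_const (fun z hz => le_of_lt hz) (closure_setOfPred_lt_im 0).ge
    (mem_ofPred_eq ▸ hz)

theorem eq_zero_on_upper_half_plane_of_eq_zero_on_Ioo {F : ℂ → ℂ} {C : ℝ}
    (hd : DiffContOnCl ℂ F {z | 0 < z.im}) (hb : ∀ z : ℂ, 0 ≤ z.im → ‖F z‖ ≤ C)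
    {a b : ℝ} (hab : a < b) (h0 : ∀ x ∈ Ioo a b, F x = 0) {z : ℂ} (hz : 0 ≤ z.im) : F z = 0 := by
  -- rescale so that `[-1, 1]` is mapped onto the middle half of `(a, b)`
  obtain ⟨c, hc⟩ : ∃ c : ℝ, c = (a + b) / 2 := ⟨_, rfl⟩
  obtain ⟨r, hr_def⟩ : ∃ r : ℝ, r = (b - a) / 4 := ⟨_, rfl⟩
  have hr : 0 < r := by linarith
  have hA : MapsTo (fun w : ℂ => c + r * w) {w | 0 < w.im} {w | 0 < w.im} := fun w hw => by
    simpa using mul_pos hr hw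
  have key := eq_zero_on_upper_half_plane_of_eq_zero_on_Icc (F := F ∘ fun w : ℂ => c + r * w)
    (hd.comp (by fun_prop : Differentiable ℂ fun w : ℂ => c + r * w).diffContOnCl hA)
    (fun w hw => hb _ (by simpa using mul_nonneg hr.le hw))
    (fun x hx => by
      have hrx : |r * x| ≤ r := by
        rw [abs_mul, abs_of_pos hr]; exact mul_le_of_le_one_right hr.le hx
      simpa using h0 (c + r * x) ⟨by linarith [(abs_le.1 hrx).1], by linarith [(abs_le.1 hrx).2]⟩)
    (z := (z - c) / r) (by simpa using div_nonneg hz hr.le)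
  simpa [mul_div_cancel₀ _ (ofReal_ne_zero.2 hr.ne')] using key

noncomputable def fourierLaplace (μ : Measure ℝ) (w : ℝ → ℂ) (z : ℂ) : ℂ :=
  ∫ p, cexp (I * p * z) * w p ∂μ

theorem norm_cexp_I_mul (p : ℝ) (z : ℂ) : ‖cexp (I * p * z)‖ = Real.exp (-(p * z.im)) := by
  rw [norm_exp]; congr 1; simp [mul_re, mul_im]

theorem norm_cexp_I_mul_le_one {p : ℝ} {z : ℂ} (hp : 0 ≤ p) (hz : 0 ≤ z.im) :
    ‖cexp (I * p * z)‖ ≤ 1 := by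
  rw [norm_cexp_I_mul, Real.exp_le_one_iff, neg_nonpos]; positivity

theorem norm_I_mul_mul_cexp_I_mul_le {p : ℝ} {z : ℂ} (hp : 0 ≤ p) {s : ℝ} (hs : 0 < s)
    (hz : s ≤ z.im) : ‖I * p * cexp (I * p * z)‖ ≤ s⁻¹ := by
  rw [norm_mul, norm_cexp_I_mul, norm_mul, norm_I, one_mul, norm_real, Real.norm_of_nonneg hp]
  calc p * Real.exp (-(p * z.im)) ≤ p * Real.exp (-(p * s)) := by gcongr
    _ = s⁻¹ * (p * s * Real.exp (-(p * s))) := by field_simp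
    _ ≤ s⁻¹ * 1 := by
      gcongr; exact (Real.mul_exp_neg_le_exp_neg_one _).trans (by simp)
    _ = s⁻¹ := mul_one _

section fourierLaplace

variable {μ : Measure ℝ} {w : ℝ → ℂ}

theorem aestronglyMeasurable_cexp_I_mul_mul (hw : AEStronglyMeasurable w μ) (z : ℂ) :
    AEStronglyMeasurable (fun p : ℝ => cexp (I * p * z) * w p) μ :=
  (by fun_prop : Continuous fun p : ℝ => cexp (I * p * z)).aestronglyMeasurable.mul hw

theorem ae_norm_cexp_I_mul_mul_le (hw0 : ∀ᵐ p ∂μ, p < 0 → w p = 0) {z : ℂ} (hz : 0 ≤ z.im) :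
    ∀ᵐ (p : ℝ) ∂μ, ‖cexp (I * p * z) * w p‖ ≤ ‖w p‖ := by
  filter_upwards [hw0] with p hp
  rcases lt_or_ge p 0 with h | h
  · simp [hp h]
  · rw [norm_mul]
    exact mul_le_of_le_one_left (norm_nonneg _) (norm_cexp_I_mul_le_one h hz)

theorem norm_fourierLaplace_le (hw : Integrable w μ) (hw0 : ∀ᵐ p ∂μ, p < 0 → w p = 0) {z : ℂ}
    (hz : 0 ≤ z.im) : ‖fourierLaplace μ w z‖ ≤ ∫ p, ‖w p‖ ∂μ :=
  norm_integral_le_of_norm_le hw.norm (ae_norm_cexp_I_mul_mul_le hw0 hz)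

theorem continuousOn_fourierLaplace (hw : Integrable w μ) (hw0 : ∀ᵐ p ∂μ, p < 0 → w p = 0) :
    ContinuousOn (fourierLaplace μ w) {z | 0 ≤ z.im} := fun z _ =>
  tendsto_integral_filter_of_dominated_convergence _
    (.of_forall (aestronglyMeasurable_cexp_I_mul_mul hw.1))
    (eventually_nhdsWithin_of_forall fun _ hz => ae_norm_cexp_I_mul_mul_le hw0 hz) hw.norm
    (.of_forall fun p => ((by fun_prop : Continuous fun z : ℂ => cexp (I * p * z) * w p).tendsto
      z).mono_left nhdsWithin_le_nhds)

theorem differentiableOn_fourierLaplace (hw : Integrable w μ)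
    (hw0 : ∀ᵐ p ∂μ, p < 0 → w p = 0) :
    DifferentiableOn ℂ (fourierLaplace μ w) {z | 0 < z.im} := by
  intro z₀ hz₀
  have hs : {z : ℂ | z₀.im / 2 < z.im} ∈ 𝓝 z₀ :=
    (isOpen_lt continuous_const continuous_im).mem_nhds (half_lt_self (mem_ofPred_eq ▸ hz₀))
  refine (hasDerivAt_integral_of_dominated_loc_of_deriv_le hs
    (.of_forall (aestronglyMeasurable_cexp_I_mul_mul hw.1))
    (hw.norm.mono' (aestronglyMeasurable_cexp_I_mul_mul hw.1 z₀)
      (ae_norm_cexp_I_mul_mul_le hw0 hz₀.le))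
    (F' := fun z p => I * p * cexp (I * p * z) * w p) ?_
    (bound := fun p => (z₀.im / 2)⁻¹ * ‖w p‖) ?_
    (hw.norm.const_mul _) ?_).2.differentiableAt.differentiableWithinAt
  · exact (by fun_prop : Continuous fun p : ℝ => I * p * cexp (I * p * z₀)).aestronglyMeasurable.mul
      hw.1
  · filter_upwards [hw0] with p hp z hz
    rcases lt_or_ge p 0 with h | h
    · simp [hp h]
    · rw [norm_mul]
      exact mul_le_mul_of_nonneg_right (norm_I_mul_mul_cexp_I_mul_le h (half_pos hz₀) hz.le)
        (norm_nonneg _)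
  · refine .of_forall fun p z _ => ?_
    simpa [mul_comm] using ((hasDerivAt_id z).const_mul (I * p)).cexp.mul_const (w p)

theorem diffContOnCl_fourierLaplace (hw : Integrable w μ) (hw0 : ∀ᵐ p ∂μ, p < 0 → w p = 0) :
    DiffContOnCl ℂ (fourierLaplace μ w) {z | 0 < z.im} :=
  ⟨differentiableOn_fourierLaplace hw hw0,
    closure_setOfPred_lt_im 0 ▸ continuousOn_fourierLaplace hw hw0⟩

end fourierLaplace

end Complex

theorem stmt2_general (μ ν : Measure ℝ)
    (w v : ℝ → ℂ) (hw : Integrable w μ) (hv : Integrable v ν)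
    (hsuppw : ∀ A : Set ℝ, MeasurableSet A → A ⊆ Set.Iio 0 → ∫ p in A, w p ∂μ = 0)
    (hsuppv : ∀ A : Set ℝ, MeasurableSet A → A ⊆ Set.Iio 0 → ∫ p in A, v p ∂ν = 0)
    (f g : ℝ → ℂ)
    (hf : ∀ t : ℝ, f t = ∫ p, Complex.exp (Complex.I * (p : ℂ) * (t : ℂ)) * w p ∂μ)
    (hg : ∀ t : ℝ, g t = ∫ p, Complex.exp (Complex.I * (p : ℂ) * (t : ℂ)) * v p ∂ν)
    (a b : ℝ) (hab : a < b)
    (heq : ∀ t ∈ Set.Ioo a b, f t = g t) :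
    ∀ t : ℝ, f t = g t := by
  have hw0 := hw.ae_eq_zero_on_of_forall_setIntegral_eq_zero measurableSet_Iio hsuppw
  have hv0 := hv.ae_eq_zero_on_of_forall_setIntegral_eq_zero measurableSet_Iio hsuppv
  have hF : ∀ t : ℝ, fourierLaplace μ w t - fourierLaplace ν v t = f t - g t := fun t => by
    rw [hf, hg, fourierLaplace, fourierLaplace]
  intro t
  rw [← sub_eq_zero, ← hF]
  refine eq_zero_on_upper_half_plane_of_eq_zero_on_Ioo
    ((diffContOnCl_fourierLaplace hw hw0).sub (diffContOnCl_fourierLaplace hv hv0))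
    (fun z hz => (norm_sub_le _ _).trans
      (add_le_add (norm_fourierLaplace_le hw hw0 hz) (norm_fourierLaplace_le hv hv0 hz)))
    hab (fun x hx => by simp [hF, heq x hx]) (by simp)

/-- Two functions of the form `∫ e^{ipt} dλ(p)`, with `λ` a finite complex measure
supported in `[0,∞)` (represented by densities w.r.t. finite measures), which agree on a
nonempty open interval agree everywhere on `ℝ`. -/
theorem stmt2 (μ ν : Measure ℝ) [IsFiniteMeasure μ] [IsFiniteMeasure ν]
    (w v : ℝ → ℂ) (hw : Integrable w μ) (hv : Integrable v ν)
    (hsuppw : ∀ A : Set ℝ, MeasurableSet A → A ⊆ Set.Iio 0 → ∫ p in A, w p ∂μ = 0)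
    (hsuppv : ∀ A : Set ℝ, MeasurableSet A → A ⊆ Set.Iio 0 → ∫ p in A, v p ∂ν = 0)
    (f g : ℝ → ℂ)
    (hf : ∀ t : ℝ, f t = ∫ p, Complex.exp (Complex.I * (p : ℂ) * (t : ℂ)) * w p ∂μ)
    (hg : ∀ t : ℝ, g t = ∫ p, Complex.exp (Complex.I * (p : ℂ) * (t : ℂ)) * v p ∂ν)
    (a b : ℝ) (hab : a < b)
    (heq : ∀ t ∈ Set.Ioo a b, f t = g t) :
    ∀ t : ℝ, f t = g t :=
  stmt2_general μ ν w v hw hv hsuppw hsuppv f g hf hg a b hab heq
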